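/- arXiv:cs/0404055 — 2 statements merged into one kernel-verified Lean document; each statement's English description precedes it below -/
import Mathlib

section
/- Let φ ∈ Bfun and ψ ∈ Pos. Then γ_FD(φ) ∩ γ_GD(ψ) = γ_FD(φ) ∩ γ_GD(ψ ∧ ⋀true(φ)); that is, the variables forced to be true by the finite-tree dependency formula φ may be conjoined to the groundness dependency formula ψ without changing the set of described substitutions. -/
/-!  Common infrastructure: finite and rational trees, substitutions in
rational solved form, the theory RT of rational trees, finiteness /
groundness operators, and Boolean functions over a set of variables of
interest. -/

/-- A signature: a type of function symbols with fixed arities. -/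
structure Signature where
  Sym : Type
  arity : Sym → ℕ

/-- Finite terms over a signature, with variables drawn from `ℕ`. -/
inductive HTerm (Sg : Signature) : Type where
  | var : ℕ → HTerm Sg
  | app : (f : Sg.Sym) → (Fin (Sg.arity f) → HTerm Sg) → HTerm Sg

namespace HTerm

variable {Sg : Signature}

/-- The set of variables occurring in a finite term. -/
def varsIn : HTerm Sg → Set ℕ
  | .var x => {x}
  | .app _ ts => ⋃ i, (ts i).varsIn

/-- Homomorphic application of a variable assignment to a finite term. -/
def substRaw (m : ℕ → HTerm Sg) : HTerm Sg → HTerm Sg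
  | .var x => m x
  | .app f ts => .app f (fun i => (ts i).substRaw m)

/-- The label of the node of a finite term at a given path
(`none` if there is no node at that path). -/
def labelAt : HTerm Sg → List ℕ → Option (Sg.Sym ⊕ ℕ)
  | .var x, [] => some (Sum.inr x)
  | .app f _, [] => some (Sum.inl f)
  | .var _, _ :: _ => none
  | .app f ts, i :: p => if h : i < Sg.arity f then (ts ⟨i, h⟩).labelAt p else none

end HTerm

/-- Substitutions: maps from variables to finite terms that are the identity
on all but finitely many variables. -/
structure Subst (Sg : Signature) where
  map : ℕ → HTerm Sg
  finite : {x : ℕ | map x ≠ HTerm.var x}.Finite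

namespace Subst

variable {Sg : Signature}

/-- The domain of a substitution. -/
def dom (σ : Subst Sg) : Set ℕ := {x | σ.map x ≠ HTerm.var x}

/-- Application of a substitution to a finite term. -/
def apply (σ : Subst Sg) (t : HTerm Sg) : HTerm Sg := t.substRaw σ.map

/-- `σ.iter i t` is `t σ^i`, the `i`-fold application of `σ` to `t`. -/
def iter (σ : Subst Sg) (i : ℕ) (t : HTerm Sg) : HTerm Sg := σ.apply^[i] t

/-- The set of variables occurring in the bindings of `σ`. -/
def varsOf (σ : Subst Sg) : Set ℕ := σ.dom ∪ ⋃ x ∈ σ.dom, (σ.map x).varsIn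

/-- The number of bindings of `σ`. -/
noncomputable def numBindings (σ : Subst Sg) : ℕ := σ.finite.toFinset.card

/-- The set of bindings of `σ`, as pairs (variable, term). -/
def bindings (σ : Subst Sg) : Set (ℕ × HTerm Sg) :=
  {p | p.1 ∈ σ.dom ∧ p.2 = σ.map p.1}

end Subst

/-- A set of bindings forms a circular substitution
`{x₁ ↦ x₂, …, x_{n-1} ↦ x_n, x_n ↦ x₁}` for some `n > 1` and
distinct variables `x₁, …, x_n`. -/
def IsCircularBindingSet {Sg : Signature} (S : Set (ℕ × HTerm Sg)) : Prop :=
  ∃ n : ℕ, 1 < n ∧ ∃ x : ℕ → ℕ,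
    (∀ i j, i < n → j < n → x i = x j → i = j) ∧
    S = {p | ∃ i < n, p = (x i, HTerm.var (x ((i + 1) % n)))}

/-- `σ` is in rational solved form: no subset of its bindings forms a
circular substitution.  `RSubst` is the set of such substitutions. -/
def Subst.InRSF {Sg : Signature} (σ : Subst Sg) : Prop :=
  ∀ S ⊆ σ.bindings, ¬ IsCircularBindingSet S

/-- Variable-idempotent substitutions:
`vars(tσσ) = vars(tσ)` for every finite term `t`. -/
def Subst.IsVSubst {Sg : Signature} (σ : Subst Sg) : Prop :=
  σ.InRSF ∧ ∀ t : HTerm Sg, (σ.apply (σ.apply t)).varsIn = (σ.apply t).varsIn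

/-- The finiteness functions `hvars_n`. -/
def Subst.hvarsN {Sg : Signature} (σ : Subst Sg) : ℕ → Set ℕ
  | 0 => {y | y ∉ σ.dom}
  | n + 1 => σ.hvarsN n ∪ {y | y ∈ σ.dom ∧ (σ.map y).varsIn ⊆ σ.hvarsN n}

/-- The finiteness operator `hvars` (the increasing chain `hvars_n` is
stationary, so its union equals its stationary value). -/
def Subst.hvars {Sg : Signature} (σ : Subst Sg) : Set ℕ := ⋃ n, σ.hvarsN n

/-- The occurrence functions `occ_n`. -/
def Subst.occN {Sg : Signature} (σ : Subst Sg) : ℕ → ℕ → Set ℕ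
  | 0, v => {v} \ σ.dom
  | n + 1, v => {y | ((σ.map y).varsIn ∩ σ.occN n v).Nonempty}

/-- The occurrence operator `occ`. -/
noncomputable def Subst.occ {Sg : Signature} (σ : Subst Sg) (v : ℕ) : Set ℕ :=
  σ.occN σ.numBindings v

/-- The groundness operator `gvars`. -/
noncomputable def Subst.gvars {Sg : Signature} (σ : Subst Sg) : Set ℕ :=
  {y | y ∈ σ.dom ∧ ∀ v ∈ σ.varsOf, y ∉ σ.occ v}

/-! Possibly infinite terms, represented by their labeling functions
(partial maps from finite paths to labels; a label is either a function
symbol or a variable). -/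

/-- The set of variables occurring in a possibly infinite term. -/
def treeVars {Sg : Signature} (u : List ℕ → Option (Sg.Sym ⊕ ℕ)) : Set ℕ :=
  {x | ∃ p, u p = some (Sum.inr x)}

/-- A possibly infinite term is finite (a member of `HTerms`) iff its set of
nodes is finite. -/
def treeFinite {Sg : Signature} (u : List ℕ → Option (Sg.Sym ⊕ ℕ)) : Prop :=
  {p | (u p).isSome}.Finite

/-- A possibly infinite term is linear iff each variable labels at most one
of its leaves. -/
def treeLinear {Sg : Signature} (u : List ℕ → Option (Sg.Sym ⊕ ℕ)) : Prop :=
  ∀ (y : ℕ) (p q : List ℕ),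
    u p = some (Sum.inr y) → u q = some (Sum.inr y) → p = q

/-- A variable `y` occurs linearly in a possibly infinite term iff it labels
exactly one of its leaves. -/
def occursLinearlyIn {Sg : Signature} (y : ℕ)
    (u : List ℕ → Option (Sg.Sym ⊕ ℕ)) : Prop :=
  ∃! p : List ℕ, u p = some (Sum.inr y)

/-- A possibly infinite term is a variable. -/
def treeIsVar {Sg : Signature} (u : List ℕ → Option (Sg.Sym ⊕ ℕ)) : Prop :=
  ∃ y : ℕ, u = (HTerm.var y : HTerm Sg).labelAt

/- `σ.rt t` is the limit of the converging sequence `t σ^i` of finite terms: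
its label at each path is the eventual (stable) label of the terms `t σ^i`
at that path. -/
open Classical in
noncomputable def Subst.rt {Sg : Signature} (σ : Subst Sg) (t : HTerm Sg) :
    List ℕ → Option (Sg.Sym ⊕ ℕ) := fun p =>
  if h : ∃ v : Option (Sg.Sym ⊕ ℕ), ∃ N : ℕ, ∀ i ≥ N, (σ.iter i t).labelAt p = v
  then h.choose else none

/-! The theory RT of rational trees, semantically. -/

/-- A first-order structure for the signature `Sg`. -/
structure Struc (Sg : Signature) where
  carrier : Type
  interp : (f : Sg.Sym) → (Fin (Sg.arity f) → carrier) → carrier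

/-- Evaluation of a finite term in a structure under a valuation. -/
def HTerm.eval {Sg : Signature} (A : Struc Sg) (v : ℕ → A.carrier) :
    HTerm Sg → A.carrier
  | .var x => v x
  | .app f ts => A.interp f (fun i => (ts i).eval A v)

/-- Sets of equations between finite terms. -/
abbrev EqSet (Sg : Signature) := Set (HTerm Sg × HTerm Sg)

/-- A valuation satisfies a set of equations (read as their conjunction). -/
def Struc.Sat {Sg : Signature} (A : Struc Sg) (v : ℕ → A.carrier)
    (E : EqSet Sg) : Prop :=
  ∀ e ∈ E, e.1.eval A v = e.2.eval A v

/-- A substitution read as the set of equations `x = σ(x)`, `x ∈ dom σ`. -/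
def Subst.eqs {Sg : Signature} (σ : Subst Sg) : EqSet Sg :=
  {e | ∃ x ∈ σ.dom, e = (HTerm.var x, σ.map x)}

/-- The variables occurring in a set of equations. -/
def eqsVars {Sg : Signature} (E : EqSet Sg) : Set ℕ :=
  ⋃ e ∈ E, (e.1.varsIn ∪ e.2.varsIn)

/-- A model of the theory RT of rational trees: a structure satisfying the
identity axioms (injectivity of each function symbol and distinctness of the
ranges of distinct function symbols) and, for each substitution in rational
solved form, the corresponding uniqueness axiom. -/
structure RTModel (Sg : Signature) where
  struc : Struc Sg
  inj : ∀ (f : Sg.Sym) (a b : Fin (Sg.arity f) → struc.carrier),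
    struc.interp f a = struc.interp f b → a = b
  distinct : ∀ (f g : Sg.Sym) (a : Fin (Sg.arity f) → struc.carrier)
    (b : Fin (Sg.arity g) → struc.carrier), f ≠ g → struc.interp f a ≠ struc.interp g b
  uniqueness : ∀ σ : Subst Sg, σ.InRSF → ∀ v : ℕ → struc.carrier,
    ∃! w : ℕ → struc.carrier,
      (∀ x ∉ σ.dom, w x = v x) ∧ struc.Sat w σ.eqs

/-- `RT ⊢ ∀(E → F)`. -/
def RTImp {Sg : Signature} (E F : EqSet Sg) : Prop :=
  ∀ (A : RTModel Sg) (v : ℕ → A.struc.carrier), A.struc.Sat v E → A.struc.Sat v F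

/-- `RT ⊢ ∀(E ↔ F)`. -/
def RTEquiv {Sg : Signature} (E F : EqSet Sg) : Prop :=
  ∀ (A : RTModel Sg) (v : ℕ → A.struc.carrier), A.struc.Sat v E ↔ A.struc.Sat v F

/-- The set of relevant most general solutions of a set of equations in RT. -/
def mgsRT {Sg : Signature} (E : EqSet Sg) : Set (Subst Sg) :=
  {σ | σ.InRSF ∧ RTEquiv σ.eqs E ∧ σ.varsOf ⊆ eqsVars E}

/-- `↓σ`: the substitutions obtainable as most general solutions of `σ`
together with some further set of equations in rational solved form. -/
def downRT {Sg : Signature} (σ : Subst Sg) : Set (Subst Sg) :=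
  {τ | ∃ σ' : Subst Sg, σ'.InRSF ∧ τ ∈ mgsRT (σ.eqs ∪ σ'.eqs)}

/-- Two valuations agree outside a set `W` of variables. -/
def agreesOff {α : Type _} (W : Set ℕ) (v w : ℕ → α) : Prop :=
  ∀ x ∉ W, v x = w x

/-- `RT ⊢ ∀(∃W.E ↔ ∃W.F)`. -/
def RTExistsEquiv {Sg : Signature} (W : Set ℕ) (E F : EqSet Sg) : Prop :=
  ∀ (A : RTModel Sg) (v : ℕ → A.struc.carrier),
    (∃ w, agreesOff W w v ∧ A.struc.Sat w E) ↔
    (∃ w, agreesOff W w v ∧ A.struc.Sat w F)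

/-- `∃∃x.{σ}` relative to the set `VI` of the variables of interest:
the substitutions `σ'` in rational solved form with
`RT ⊢ ∀(∃ (Vars ∖ VI) . (σ' ↔ ∃x.σ))`. -/
def projExists {Sg : Signature} (VI : Set ℕ) (x : ℕ) (σ : Subst Sg) :
    Set (Subst Sg) :=
  {σ' | σ'.InRSF ∧ ∀ (A : RTModel Sg) (v : ℕ → A.struc.carrier),
    ∃ w, agreesOff VIᶜ w v ∧
      (A.struc.Sat w σ'.eqs ↔ ∃ u, agreesOff {x} u w ∧ A.struc.Sat u σ.eqs)}

/-- `∃∃x.Σ` for a set `Σ` of substitutions. -/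
def projExistsSet {Sg : Signature} (VI : Set ℕ) (x : ℕ) (S : Set (Subst Sg)) :
    Set (Subst Sg) := ⋃ σ ∈ S, projExists VI x σ

/-! Boolean valuations and Boolean functions over the variables of
interest (semantically: only the values on `VI` matter). -/

abbrev BVal := ℕ → Prop
abbrev BFun := BVal → Prop

/-- Entailment `φ ⊨ ψ` of Boolean functions. -/
def BFun.Entails (φ ψ : BFun) : Prop := ∀ a, φ a → ψ a

/-- The Boolean function of a variable. -/
def bVar (x : ℕ) : BFun := fun a => a x

def bAnd (φ ψ : BFun) : BFun := fun a => φ a ∧ ψ a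
def bOr (φ ψ : BFun) : BFun := fun a => φ a ∨ ψ a
def bNot (φ : BFun) : BFun := fun a => ¬ φ a
def bIff (φ ψ : BFun) : BFun := fun a => φ a ↔ ψ a

/-- `⋀S`: the conjunction of the variables in `S` (`⊤` if `S = ∅`). -/
def bConj (S : Set ℕ) : BFun := fun a => ∀ x ∈ S, a x

/-- `∃x.φ = φ[1/x] ∨ φ[0/x]` (Schröder's elimination principle). -/
def bExists (x : ℕ) (φ : BFun) : BFun :=
  fun a => φ (Function.update a x True) ∨ φ (Function.update a x False)

/-- `∃S.φ`: elimination of all the variables of `S`. -/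
def bExistsSet (S : Set ℕ) (φ : BFun) : BFun :=
  fun a => ∃ b : BVal, (∀ x ∉ S, b x = a x) ∧ φ b

/-- `true(φ)`: the variables of `VI` necessarily true for `φ`. -/
def trueVars (VI : Set ℕ) (φ : BFun) : Set ℕ := {x ∈ VI | ∀ a, φ a → a x}

/-- `false(φ)`: the variables of `VI` necessarily false for `φ`. -/
def falseVars (VI : Set ℕ) (φ : BFun) : Set ℕ := {x ∈ VI | ∀ a, φ a → ¬ a x}

/-- `φ ∈ Pos`: `φ` is true under the everything-is-true assignment. -/
def IsPos (φ : BFun) : Prop := φ (fun _ => True)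

/-- `pos(φ) = φ ∨ ⋀VI`. -/
def bPos (VI : Set ℕ) (φ : BFun) : BFun := bOr φ (bConj VI)

/-- `hval(σ)`: the valuation assigning true exactly to the variables of
`hvars(σ)`. -/
def Subst.hval {Sg : Signature} (σ : Subst Sg) : BVal := fun x => x ∈ σ.hvars

/-- `gval(σ)`: the valuation assigning true exactly to the variables of
`gvars(σ)`. -/
noncomputable def Subst.gval {Sg : Signature} (σ : Subst Sg) : BVal :=
  fun x => x ∈ σ.gvars

/-- `γ_H(h)`. -/
def gammaH {Sg : Signature} (h : Set ℕ) : Set (Subst Sg) :=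
  {σ | σ.InRSF ∧ h ⊆ σ.hvars}

/-- `γ_FD(φ)`. -/
def gammaFD {Sg : Signature} (φ : BFun) : Set (Subst Sg) :=
  {σ | σ.InRSF ∧ ∀ τ ∈ downRT σ, φ τ.hval}

/-- `γ_GD(ψ)`. -/
noncomputable def gammaGD {Sg : Signature} (ψ : BFun) : Set (Subst Sg) :=
  {σ | σ.InRSF ∧ ∀ τ ∈ downRT σ, ψ τ.gval}

/-- The substitution consisting of the single binding `x ↦ t`. -/
def singleSubst {Sg : Signature} (x : ℕ) (t : HTerm Sg) : Subst Sg where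
  map := fun y => if y = x then t else HTerm.var y
  finite := Set.Finite.subset (Set.finite_singleton x) (fun y hy => by
    by_contra hxy
    rw [Set.mem_singleton_iff] at hxy
    simp only [Set.mem_setOf_eq] at hy
    exact hy (if_neg hxy))

section AuxLemmas

variable {Sg : Signature}

lemma varsOf_subset_eqsVars (σ : Subst Sg) : σ.varsOf ⊆ eqsVars σ.eqs := by
  intro y hy
  rcases hy with hy | hy
  · exact Set.mem_biUnion (⟨y, hy, rfl⟩ : (HTerm.var y, σ.map y) ∈ σ.eqs)
      (Set.mem_union_left _ (by simp [HTerm.varsIn]))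
  · simp only [Set.mem_iUnion] at hy
    obtain ⟨x, hx, hyx⟩ := hy
    exact Set.mem_biUnion (⟨x, hx, rfl⟩ : (HTerm.var x, σ.map x) ∈ σ.eqs)
      (Set.mem_union_right _ hyx)

/-- Extend `τ` with the binding `v ↦ f(v, …, v)`. -/
def extSubst (τ : Subst Sg) (v : ℕ) (f : Sg.Sym) : Subst Sg where
  map := fun y => if y = v then HTerm.app f (fun _ => HTerm.var v) else τ.map y
  finite := (τ.finite.union (Set.finite_singleton v)).subset (by
    intro y hy
    simp only [Set.mem_setOf_eq] at hy
    by_cases h : y = v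
    · exact Set.mem_union_right _ (by simp [h])
    · exact Set.mem_union_left _ (by simpa [h] using hy))

lemma extSubst_map_self (τ : Subst Sg) (v : ℕ) (f : Sg.Sym) :
    (extSubst τ v f).map v = HTerm.app f (fun _ => HTerm.var v) := by
  simp [extSubst]

lemma extSubst_map_ne (τ : Subst Sg) (v : ℕ) (f : Sg.Sym) {y : ℕ} (h : y ≠ v) :
    (extSubst τ v f).map y = τ.map y := by
  simp [extSubst, h]

lemma mem_dom_extSubst_self (τ : Subst Sg) (v : ℕ) (f : Sg.Sym) :
    v ∈ (extSubst τ v f).dom := by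
  simp only [Subst.dom, Set.mem_setOf_eq, extSubst_map_self]
  intro h; cases h

lemma mem_dom_extSubst_of_mem (τ : Subst Sg) {v : ℕ} (f : Sg.Sym)
    (hv : v ∉ τ.dom) {y : ℕ} (hy : y ∈ τ.dom) : y ∈ (extSubst τ v f).dom := by
  have hne : y ≠ v := fun h => hv (h ▸ hy)
  simpa only [Subst.dom, Set.mem_setOf_eq, extSubst_map_ne τ v f hne] using hy

lemma extSubst_inRSF (τ : Subst Sg) (v : ℕ) (f : Sg.Sym) (hτ : τ.InRSF)
    (hv : v ∉ τ.dom) : (extSubst τ v f).InRSF := by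
  intro S hS hcirc
  refine hτ S ?_ hcirc
  intro p hp
  have hpb := hS hp
  obtain ⟨n, hn, x, hinj, hSeq⟩ := hcirc
  have hpshape : ∃ i < n, p = (x i, HTerm.var (x ((i + 1) % n))) := by
    rw [hSeq] at hp; exact hp
  obtain ⟨i, hi, hpe⟩ := hpshape
  obtain ⟨hp1, hp2⟩ := hpb
  have hne : p.1 ≠ v := by
    intro h
    rw [h, extSubst_map_self] at hp2
    rw [hpe] at hp2
    cases hp2
  refine ⟨?_, ?_⟩
  · have := hp1
    simpa only [Subst.dom, Set.mem_setOf_eq, extSubst_map_ne τ v f hne] using this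
  · rw [hp2, extSubst_map_ne τ v f hne]

lemma eqs_subset_extSubst (τ : Subst Sg) {v : ℕ} (f : Sg.Sym) (hv : v ∉ τ.dom) :
    τ.eqs ⊆ (extSubst τ v f).eqs := by
  rintro e ⟨x, hx, rfl⟩
  have hne : x ≠ v := fun h => hv (h ▸ hx)
  exact ⟨x, mem_dom_extSubst_of_mem τ f hv hx, by rw [extSubst_map_ne τ v f hne]⟩

lemma extSubst_mem_downRT {σ τ : Subst Sg} {v : ℕ} (f : Sg.Sym)
    (hv : v ∉ τ.dom) (hτ : τ ∈ downRT σ) : extSubst τ v f ∈ downRT σ := by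
  obtain ⟨σ₁, hσ₁, hτRSF, hequiv, hvars⟩ := hτ
  refine ⟨extSubst τ v f, extSubst_inRSF τ v f hτRSF hv, ?_, ?_, ?_⟩
  · exact extSubst_inRSF τ v f hτRSF hv
  · intro A w
    constructor
    · intro hsat e he
      rcases he with he | he
      · have hτsat : A.struc.Sat w τ.eqs := fun e' he' =>
          hsat e' (eqs_subset_extSubst τ f hv he')
        have := (hequiv A w).1 hτsat
        exact this e (Or.inl he)
      · exact hsat e he
    · intro hsat e he
      exact hsat e (Or.inr he)
  · intro y hy
    have h1 : y ∈ eqsVars (extSubst τ v f).eqs := varsOf_subset_eqsVars _ hy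
    simp only [eqsVars, Set.mem_iUnion] at h1 ⊢
    obtain ⟨e, he, hye⟩ := h1
    exact ⟨e, Or.inr he, hye⟩

lemma self_mem_varsIn_app (f : Sg.Sym) (hf : 0 < Sg.arity f) (v : ℕ) :
    v ∈ (HTerm.app f (fun _ => HTerm.var v) : HTerm Sg).varsIn := by
  simp only [HTerm.varsIn, Set.mem_iUnion]
  exact ⟨⟨0, hf⟩, rfl⟩

lemma v_not_mem_hvarsN_ext (τ : Subst Sg) (v : ℕ) (f : Sg.Sym)
    (hf : 0 < Sg.arity f) : ∀ m, v ∉ (extSubst τ v f).hvarsN m := by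
  intro m
  induction m with
  | zero =>
      exact fun h => h (mem_dom_extSubst_self τ v f)
  | succ m ih =>
      rintro (h | ⟨_, h2⟩)
      · exact ih h
      · exact ih (h2 (by rw [extSubst_map_self]; exact self_mem_varsIn_app f hf v))

lemma occN_not_mem_hvarsN_ext (τ : Subst Sg) (v : ℕ) (f : Sg.Sym)
    (hf : 0 < Sg.arity f) (hv : v ∉ τ.dom) :
    ∀ n y, y ∈ τ.occN n v → ∀ m, y ∉ (extSubst τ v f).hvarsN m := by
  intro n
  induction n with
  | zero =>
      intro y hy m
      obtain ⟨hy1, _⟩ := hy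
      rw [Set.mem_singleton_iff] at hy1
      subst hy1
      exact v_not_mem_hvarsN_ext τ y f hf m
  | succ n ih =>
      intro y hy m
      obtain ⟨z, hz1, hz2⟩ := hy
      by_cases hyd : y ∈ τ.dom
      · have hne : y ≠ v := fun h => hv (h ▸ hyd)
        induction m with
        | zero =>
            exact fun h => h (mem_dom_extSubst_of_mem τ f hv hyd)
        | succ m ihm =>
            rintro (h | ⟨_, h2⟩)
            · exact ihm h
            · refine ih z hz2 m ?_
              exact h2 (by rw [extSubst_map_ne τ v f hne]; exact hz1)
      · have hmap : τ.map y = HTerm.var y := by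
          by_contra h; exact hyd h
        rw [hmap] at hz1
        have : z = y := hz1
        subst this
        exact ih z hz2 m

lemma occN_nonempty_not_dom (τ : Subst Sg) (v : ℕ) :
    ∀ n, (τ.occN n v).Nonempty → v ∉ τ.dom := by
  intro n
  induction n with
  | zero =>
      rintro ⟨y, hy1, hy2⟩
      rw [Set.mem_singleton_iff] at hy1
      subst hy1; exact hy2
  | succ n ih =>
      rintro ⟨y, z, _, hz2⟩
      exact ih ⟨z, hz2⟩

end AuxLemmas

/-- `γ_FD(φ) ∩ γ_GD(ψ) = γ_FD(φ) ∩ γ_GD(ψ ∧ ⋀true(φ))`. -/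
theorem gammaFD_improves_gammaGD
    (Sg : Signature) (hconst : ∃ f, Sg.arity f = 0) (hposar : ∃ f, 0 < Sg.arity f)
    (VI : Set ℕ) (hVI : VI.Finite) (φ ψ : BFun) (hψ : IsPos ψ) :
    gammaFD (Sg := Sg) φ ∩ gammaGD ψ
      = gammaFD (Sg := Sg) φ ∩ gammaGD (bAnd ψ (bConj (trueVars VI φ))) := by
  ext σ
  simp only [Set.mem_inter_iff]
  constructor
  · rintro ⟨hFD, hGD⟩
    refine ⟨hFD, hGD.1, ?_⟩
    intro τ hτ
    refine ⟨hGD.2 τ hτ, ?_⟩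
    intro x hx
    obtain ⟨hxVI, hxall⟩ := hx
    by_contra hxg
    obtain ⟨f, hf⟩ := hposar
    have hkey : ∃ v n, v ∉ τ.dom ∧ x ∈ τ.occN n v := by
      by_cases hxd : x ∈ τ.dom
      · have hxg' : ¬ (x ∈ τ.dom ∧ ∀ v ∈ τ.varsOf, x ∉ τ.occ v) := hxg
        push_neg at hxg'
        obtain ⟨v, _, hv2⟩ := hxg' hxd
        exact ⟨v, τ.numBindings, occN_nonempty_not_dom τ v _ ⟨x, hv2⟩, hv2⟩
      · exact ⟨x, 0, hxd, ⟨rfl, hxd⟩⟩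
    obtain ⟨v, n, hv, hocc⟩ := hkey
    have hext := extSubst_mem_downRT (σ := σ) f hv hτ
    have hφ := hFD.2 _ hext
    have hxh : x ∈ (extSubst τ v f).hvars := hxall _ hφ
    simp only [Subst.hvars, Set.mem_iUnion] at hxh
    obtain ⟨m, hm⟩ := hxh
    exact occN_not_mem_hvarsN_ext τ v f hf hv n x hocc m hm
  · rintro ⟨hFD, hGD⟩
    exact ⟨hFD, hGD.1, fun τ hτ => (hGD.2 τ hτ).1⟩
end

section
/- Let σ ∈ VSubst and let x ↦ t be a binding. Suppose (r, r') is either (x, t) or (t, x), that vars(r) ⊆ hvars(σ), and that rt(r, σ) ∈ GTerms. Then for every τ ∈ mgs(σ ∪ {x = t}): hvars(σ) ∪ vars(r') ⊆ hvars(τ). -/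
/-! ### Auxiliary development -/

namespace AMGU

open HTerm

variable {Sg : Signature}

/-- The carrier of the big tree model: arbitrary labelings of paths. -/
def Carrier (Sg : Signature) : Type := List ℕ → Option (Sg.Sym ⊕ ℕ)

/-- Interpretation of function symbols on `Carrier`. -/
def interpC (f : Sg.Sym) (us : Fin (Sg.arity f) → Carrier Sg) : Carrier Sg
  | [] => some (Sum.inl f)
  | i :: p => if h : i < Sg.arity f then us ⟨i, h⟩ p else none

/-- The big tree structure. -/
def strucC (Sg : Signature) : Struc Sg := ⟨Carrier Sg, interpC⟩

@[simp] lemma eval_var (v : ℕ → Carrier Sg) (z : ℕ) :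
    (HTerm.var z).eval (strucC Sg) v = v z := rfl

@[simp] lemma eval_app_nil (v : ℕ → Carrier Sg) (f : Sg.Sym) (ts) :
    (HTerm.app f ts).eval (strucC Sg) v [] = some (Sum.inl f) := rfl

lemma eval_app_cons (v : ℕ → Carrier Sg) (f : Sg.Sym) (ts) (i : ℕ) (p : List ℕ) :
    (HTerm.app f ts).eval (strucC Sg) v (i :: p) =
      if h : i < Sg.arity f then (ts ⟨i, h⟩).eval (strucC Sg) v p else none := rfl


/-! #### Basic term lemmas -/

@[simp] lemma substRaw_var (m : ℕ → HTerm Sg) (z : ℕ) :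
    (HTerm.var z).substRaw m = m z := rfl

@[simp] lemma substRaw_app (m : ℕ → HTerm Sg) (f : Sg.Sym) (ts) :
    (HTerm.app f ts).substRaw m = .app f (fun i => (ts i).substRaw m) := rfl

lemma substRaw_id (t : HTerm Sg) : t.substRaw (fun y => .var y) = t := by
  induction t with
  | var z => rfl
  | app f ts ih => exact congrArg (HTerm.app f) (funext ih)

lemma substRaw_comp (m1 m2 : ℕ → HTerm Sg) (t : HTerm Sg) :
    (t.substRaw m1).substRaw m2 = t.substRaw (fun y => (m1 y).substRaw m2) := by
  induction t with
  | var z => rfl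
  | app f ts ih => exact congrArg (HTerm.app f) (funext ih)

@[simp] lemma labelAt_var_nil (z : ℕ) :
    (HTerm.var z : HTerm Sg).labelAt [] = some (Sum.inr z) := rfl

@[simp] lemma labelAt_var_cons (z i : ℕ) (p : List ℕ) :
    (HTerm.var z : HTerm Sg).labelAt (i :: p) = none := rfl

@[simp] lemma labelAt_app_nil (f : Sg.Sym) (ts) :
    (HTerm.app f ts : HTerm Sg).labelAt [] = some (Sum.inl f) := rfl

lemma labelAt_app_cons (f : Sg.Sym) (ts) (i : ℕ) (p : List ℕ) :
    (HTerm.app f ts : HTerm Sg).labelAt (i :: p) =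
      if h : i < Sg.arity f then (ts ⟨i, h⟩).labelAt p else none := rfl

lemma labelAt_var_inv {z : ℕ} {q : List ℕ} {y : ℕ}
    (h : (HTerm.var z : HTerm Sg).labelAt q = some (Sum.inr y)) : q = [] ∧ y = z := by
  cases q with
  | nil => simp at h; exact ⟨rfl, h.symm⟩
  | cons i p => simp at h

@[simp] lemma varsIn_var (z : ℕ) : (HTerm.var z : HTerm Sg).varsIn = {z} := rfl

@[simp] lemma varsIn_app (f : Sg.Sym) (ts) :
    (HTerm.app f ts : HTerm Sg).varsIn = ⋃ i, (ts i).varsIn := rfl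

lemma varsIn_finite (t : HTerm Sg) : t.varsIn.Finite := by
  induction t with
  | var z => exact Set.finite_singleton z
  | app f ts ih => exact Set.finite_iUnion ih

lemma exists_path_of_mem_varsIn {t : HTerm Sg} {y : ℕ} (h : y ∈ t.varsIn) :
    ∃ q, t.labelAt q = some (Sum.inr y) := by
  induction t with
  | var z => rw [varsIn_var, Set.mem_singleton_iff] at h; exact ⟨[], by simp [h]⟩
  | app f ts ih =>
      rw [varsIn_app, Set.mem_iUnion] at h
      obtain ⟨i, hi⟩ := h
      obtain ⟨q, hq⟩ := ih i hi
      exact ⟨(i : ℕ) :: q, by rw [labelAt_app_cons, dif_pos i.isLt, Fin.eta]; exact hq⟩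

lemma mem_varsIn_of_labelAt {t : HTerm Sg} {q : List ℕ} {y : ℕ}
    (h : t.labelAt q = some (Sum.inr y)) : y ∈ t.varsIn := by
  induction t generalizing q with
  | var z => obtain ⟨rfl, rfl⟩ := labelAt_var_inv h; exact rfl
  | app f ts ih =>
      cases q with
      | nil => simp at h
      | cons i p =>
          rw [labelAt_app_cons] at h
          by_cases hi : i < Sg.arity f
          · rw [dif_pos hi] at h
            rw [varsIn_app, Set.mem_iUnion]
            exact ⟨⟨i, hi⟩, ih _ h⟩
          · rw [dif_neg hi] at h; exact absurd h (by simp)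

lemma labelAt_substRaw_cases (m : ℕ → HTerm Sg) (t : HTerm Sg) (p : List ℕ)
    (ℓ : Sg.Sym ⊕ ℕ) (h : (t.substRaw m).labelAt p = some ℓ) :
    (∃ f, t.labelAt p = some (Sum.inl f) ∧ ℓ = Sum.inl f) ∨
    (∃ q s y, p = q ++ s ∧ t.labelAt q = some (Sum.inr y) ∧ (m y).labelAt s = some ℓ) := by
  induction t generalizing p with
  | var z => exact Or.inr ⟨[], p, z, rfl, rfl, h⟩
  | app f ts ih =>
      cases p with
      | nil =>
          rw [substRaw_app, labelAt_app_nil] at h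
          exact Or.inl ⟨f, rfl, (Option.some_inj.mp h).symm⟩
      | cons i p' =>
          rw [substRaw_app, labelAt_app_cons] at h
          by_cases hi : i < Sg.arity f
          · rw [dif_pos hi] at h
            rcases ih ⟨i, hi⟩ p' h with ⟨g, hg, hl⟩ | ⟨q, s, y, hp, hq, hs⟩
            · exact Or.inl ⟨g, by rw [labelAt_app_cons, dif_pos hi]; exact hg, hl⟩
            · exact Or.inr ⟨i :: q, s, y, by rw [hp]; rfl,
                by rw [labelAt_app_cons, dif_pos hi]; exact hq, hs⟩
          · rw [dif_neg hi] at h; exact absurd h (by simp)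

lemma eval_append_of_labelAt (v : ℕ → Carrier Sg) {t : HTerm Sg} {q : List ℕ} {y : ℕ}
    (h : t.labelAt q = some (Sum.inr y)) (s : List ℕ) :
    t.eval (strucC Sg) v (q ++ s) = v y s := by
  induction t generalizing q with
  | var z => obtain ⟨rfl, rfl⟩ := labelAt_var_inv h; rfl
  | app f ts ih =>
      cases q with
      | nil => simp at h
      | cons i p =>
          rw [labelAt_app_cons] at h
          by_cases hi : i < Sg.arity f
          · rw [dif_pos hi] at h
            show (HTerm.app f ts).eval (strucC Sg) v (i :: (p ++ s)) = v y s
            rw [eval_app_cons, dif_pos hi]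
            exact ih _ h
          · rw [dif_neg hi] at h; exact absurd h (by simp)

lemma eval_eq_of_agree {w1 w2 : ℕ → Carrier Sg} (t : HTerm Sg) (p : List ℕ)
    (h : ∀ q s y, p = q ++ s → t.labelAt q = some (Sum.inr y) → w1 y s = w2 y s) :
    t.eval (strucC Sg) w1 p = t.eval (strucC Sg) w2 p := by
  induction t generalizing p with
  | var z => exact h [] p z rfl rfl
  | app f ts ih =>
      cases p with
      | nil => rfl
      | cons i p' =>
          rw [eval_app_cons, eval_app_cons]
          by_cases hi : i < Sg.arity f
          · rw [dif_pos hi, dif_pos hi]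
            refine ih _ p' (fun q s y hp hq => ?_)
            exact h (i :: q) s y (by rw [hp]; rfl)
              (by rw [labelAt_app_cons, dif_pos hi]; exact hq)
          · rw [dif_neg hi, dif_neg hi]

lemma eval_substRaw (v : ℕ → Carrier Sg) (m : ℕ → HTerm Sg) (t : HTerm Sg) :
    (t.substRaw m).eval (strucC Sg) v =
      t.eval (strucC Sg) (fun y => (m y).eval (strucC Sg) v) := by
  induction t with
  | var z => rfl
  | app f ts ih =>
      rw [substRaw_app]
      show (strucC Sg).interp f _ = (strucC Sg).interp f _
      exact congrArg _ (funext fun i => ih i)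

lemma varsIn_substRaw (m : ℕ → HTerm Sg) (t : HTerm Sg) :
    (t.substRaw m).varsIn = ⋃ y ∈ t.varsIn, (m y).varsIn := by
  induction t with
  | var z => simp
  | app f ts ih =>
      rw [substRaw_app, varsIn_app, varsIn_app]
      simp only [ih]
      rw [Set.biUnion_iUnion]


/-! #### Substitution lemmas -/

open Classical

lemma mem_dom_iff (s : Subst Sg) (z : ℕ) : z ∈ s.dom ↔ s.map z ≠ .var z := Iff.rfl

lemma map_eq_var_of_not_mem_dom (s : Subst Sg) {z : ℕ} (h : z ∉ s.dom) :
    s.map z = .var z := not_not.mp h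

@[simp] lemma apply_var (s : Subst Sg) (z : ℕ) : s.apply (.var z) = s.map z := rfl

lemma apply_app (s : Subst Sg) (f : Sg.Sym) (ts) :
    s.apply (.app f ts) = .app f (fun i => s.apply (ts i)) := rfl

lemma apply_fix (s : Subst Sg) {t : HTerm Sg} (h : ∀ y ∈ t.varsIn, y ∉ s.dom) :
    s.apply t = t := by
  induction t with
  | var z => exact map_eq_var_of_not_mem_dom s (h z rfl)
  | app f ts ih =>
      refine congrArg (HTerm.app f) (funext fun i => ih i (fun y hy => h y ?_))
      rw [varsIn_app, Set.mem_iUnion]; exact ⟨i, hy⟩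

@[simp] lemma iter_zero (s : Subst Sg) (t : HTerm Sg) : s.iter 0 t = t := rfl

lemma iter_succ (s : Subst Sg) (k : ℕ) (t : HTerm Sg) :
    s.iter (k + 1) t = s.iter k (s.apply t) := Function.iterate_succ_apply _ _ _

lemma iter_succ' (s : Subst Sg) (k : ℕ) (t : HTerm Sg) :
    s.iter (k + 1) t = s.apply (s.iter k t) := Function.iterate_succ_apply' _ _ _

lemma iter_add (s : Subst Sg) (a b : ℕ) (t : HTerm Sg) :
    s.iter (a + b) t = s.iter a (s.iter b t) := Function.iterate_add_apply _ _ _ _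

lemma iter_fix (s : Subst Sg) {t : HTerm Sg} (h : ∀ y ∈ t.varsIn, y ∉ s.dom) (k : ℕ) :
    s.iter k t = t := by
  induction k with
  | zero => rfl
  | succ k ih => rw [iter_succ' , ih, apply_fix s h]

lemma iter_var_of_not_mem_dom (s : Subst Sg) {z : ℕ} (h : z ∉ s.dom) (k : ℕ) :
    s.iter k (.var z) = .var z :=
  iter_fix s (fun y hy => by rw [varsIn_var, Set.mem_singleton_iff] at hy; exact hy ▸ h) k

lemma iter_as_substRaw (s : Subst Sg) (k : ℕ) (t : HTerm Sg) :
    s.iter k t = t.substRaw (fun y => s.iter k (.var y)) := by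
  induction k with
  | zero => exact (substRaw_id t).symm
  | succ k ih =>
      rw [iter_succ', ih]
      show (HTerm.substRaw _ t).substRaw s.map = _
      rw [substRaw_comp]
      refine congrArg t.substRaw (funext fun y => ?_)
      show s.apply (s.iter k (.var y)) = _
      rw [← iter_succ']

lemma varsIn_iter (s : Subst Sg) (k : ℕ) (t : HTerm Sg) :
    (s.iter k t).varsIn = ⋃ y ∈ t.varsIn, (s.iter k (.var y)).varsIn := by
  rw [iter_as_substRaw, varsIn_substRaw]

/-! #### Rank of variable chains in an RSF substitution -/

/-- Follow a variable-to-variable binding. -/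
def stepv (s : Subst Sg) (y : ℕ) : ℕ := match s.map y with | .var y' => y' | _ => y

lemma stepv_eq (s : Subst Sg) {y y' : ℕ} (h : s.map y = .var y') : stepv s y = y' := by
  unfold stepv; rw [h]

/-- The variable chain from `y` stops here. -/
def Stops (s : Subst Sg) (y : ℕ) : Prop := y ∉ s.dom ∨ ∀ y', s.map y ≠ .var y'

lemma cycle_free {s : Subst Sg} (hR : s.InRSF) (f : ℕ → ℕ)
    (hf : ∀ m, f m ∈ s.dom ∧ s.map (f m) = .var (f (m + 1))) : False := by
  -- pigeonhole on `f` over `Fin (numBindings + 1)`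
  have hmaps : ∀ i : Fin (s.numBindings + 1), f i ∈ s.finite.toFinset := by
    intro i; rw [Set.Finite.mem_toFinset]; exact (hf i).1
  obtain ⟨i, _, j, _, hij, hfij⟩ :=
    Finset.exists_ne_map_eq_of_card_lt_of_maps_to
      (by rw [Finset.card_univ, Fintype.card_fin]; exact Nat.lt_succ_self _)
      (fun i _ => hmaps i)
  have hrep : ∃ b, ∃ a < b, f a = f b := by
    rcases lt_or_gt_of_ne (fun h : (i : ℕ) = (j : ℕ) => hij (Fin.ext h)) with h | h
    · exact ⟨j, i, h, hfij⟩
    · exact ⟨i, j, h, hfij.symm⟩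
  obtain ⟨b, ⟨a, hab, hfab⟩, hmin⟩ :
      ∃ b, (∃ a < b, f a = f b) ∧ ∀ b' < b, ¬ ∃ a' < b', f a' = f b' :=
    ⟨Nat.find hrep, Nat.find_spec hrep, fun b' hb' => Nat.find_min hrep hb'⟩
  set n := b - a with hn
  have hnpos : 0 < n := Nat.sub_pos_of_lt hab
  have hanb : a + n = b := by omega
  set x : ℕ → ℕ := fun m => f (a + m) with hx
  have hchain : ∀ m, s.map (x m) = .var (x (m + 1)) := fun m => by
    have := (hf (a + m)).2
    simpa [hx, Nat.add_assoc] using this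
  have hxwrap : x n = x 0 := by
    show f (a + n) = f (a + 0)
    rw [hanb, Nat.add_zero, hfab]
  have hwrap : ∀ m < n, s.map (x m) = .var (x ((m + 1) % n)) := by
    intro m hm
    rcases Nat.lt_or_ge (m + 1) n with h | h
    · rw [Nat.mod_eq_of_lt h]; exact hchain m
    · have hmn : m + 1 = n := le_antisymm (by omega) h
      have h0 : (m + 1) % n = 0 := by rw [hmn, Nat.mod_self]
      rw [h0, hchain m, hmn, hxwrap]
  have hne1 : n ≠ 1 := by
    intro h1
    have hc := hchain 0
    have hx1 : x (0 + 1) = x 0 := by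
      rw [Nat.zero_add]
      have h2 := hxwrap; rw [h1] at h2; exact h2
    rw [hx1] at hc
    exact (hf (a + 0)).1 hc
  have hdist : ∀ i j, i < n → j < n → x i = x j → i = j := by
    intro i' j' hi hj hxij
    by_contra hne
    rcases lt_or_gt_of_ne hne with h | h
    · exact hmin (a + j') (by omega) ⟨a + i', by omega, hxij⟩
    · exact hmin (a + i') (by omega) ⟨a + j', by omega, hxij.symm⟩
  set S : Set (ℕ × HTerm Sg) :=
    {p | ∃ m < n, p = (x m, HTerm.var (x ((m + 1) % n)))} with hS
  refine hR S ?_ ⟨n, by omega, x, hdist, rfl⟩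
  rintro ⟨u, t⟩ ⟨m, hm, heq⟩
  obtain ⟨h1, h2⟩ := Prod.mk.injEq .. ▸ heq
  constructor
  · show u ∈ s.dom
    rw [h1]; exact (hf (a + m)).1
  · show t = s.map u
    rw [h1, h2, hwrap m hm]

lemma stops_exists (s : Subst Sg) (hR : s.InRSF) (y : ℕ) :
    ∃ m, Stops s ((stepv s)^[m] y) := by
  by_contra hc
  push_neg at hc
  refine cycle_free hR (fun m => (stepv s)^[m] y) (fun m => ?_)
  have h := hc m
  rw [Stops, not_or, not_not] at h
  obtain ⟨h1, h2⟩ := h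
  push_neg at h2
  obtain ⟨y', hy'⟩ := h2
  refine ⟨h1, ?_⟩
  show s.map ((stepv s)^[m] y) = .var ((stepv s)^[m + 1] y)
  rw [Function.iterate_succ_apply', stepv_eq s hy']
  exact hy'

noncomputable def cRank (s : Subst Sg) (hR : s.InRSF) (y : ℕ) : ℕ :=
  Nat.find (stops_exists s hR y)

lemma cRank_lt (s : Subst Sg) (hR : s.InRSF) {y y' : ℕ}
    (hy : y ∈ s.dom) (h : s.map y = .var y') : cRank s hR y' < cRank s hR y := by
  have h0 : ¬ Stops s ((stepv s)^[0] y) := by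
    rw [Function.iterate_zero_apply, Stops, not_or, not_not]
    exact ⟨hy, by push_neg; exact ⟨y', h⟩⟩
  have hpos : 0 < cRank s hR y := by
    rcases Nat.eq_zero_or_pos (cRank s hR y) with h' | h'
    · exact absurd (h' ▸ Nat.find_spec (stops_exists s hR y)) h0
    · exact h'
  obtain ⟨k, hk⟩ : ∃ k, cRank s hR y = k + 1 := ⟨cRank s hR y - 1, by omega⟩
  have hspec : Stops s ((stepv s)^[cRank s hR y] y) := Nat.find_spec (stops_exists s hR y)
  rw [hk, Function.iterate_succ_apply, stepv_eq s h] at hspec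
  have hle : cRank s hR y' ≤ k := Nat.find_le hspec
  omega


/-! #### Iteration pushes domain variables deep -/

lemma labelAt_nil_inv {t : HTerm Sg} {y : ℕ} (h : t.labelAt [] = some (Sum.inr y)) :
    t = .var y := by
  cases t with
  | var z => simp at h; rw [h]
  | app f ts => simp at h

/-- No variable of `s.dom` occurs in `t` at depth `< D`. -/
def GoodD (s : Subst Sg) (D : ℕ) (t : HTerm Sg) : Prop :=
  ∀ p y, p.length < D → t.labelAt p = some (Sum.inr y) → y ∉ s.dom

lemma GoodD_apply (s : Subst Sg) {D : ℕ} {t : HTerm Sg} (h : GoodD s D t) :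
    GoodD s D (s.apply t) := by
  intro p y hp hl
  rcases labelAt_substRaw_cases s.map t p _ hl with ⟨f, _, hlf⟩ | ⟨q, s', y0, rfl, hq, hs⟩
  · exact absurd hlf (by simp)
  · by_cases h0 : y0 ∈ s.dom
    · exact absurd h0 (h q y0 (by rw [List.length_append] at hp; omega) hq)
    · rw [map_eq_var_of_not_mem_dom s h0] at hs
      obtain ⟨_, rfl⟩ := labelAt_var_inv hs
      exact h0

lemma GoodD_iter (s : Subst Sg) {D : ℕ} {t : HTerm Sg} (h : GoodD s D t) (k : ℕ) :
    GoodD s D (s.iter k t) := by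
  induction k with
  | zero => exact h
  | succ k ih => rw [iter_succ']; exact GoodD_apply s ih

lemma goodD_iter_exists (s : Subst Sg) (hR : s.InRSF) (D : ℕ) (t : HTerm Sg) :
    ∃ k0, ∀ k ≥ k0, GoodD s D (s.iter k t) := by
  induction D with
  | zero => exact ⟨0, fun k _ p y hp _ => absurd hp (by omega)⟩
  | succ D ih =>
      obtain ⟨k1, hk1⟩ := ih
      set M := s.finite.toFinset.sup (cRank s hR) with hM
      have key : ∀ j p y, p.length < D + 1 →
          (s.iter (k1 + j) t).labelAt p = some (Sum.inr y) → y ∈ s.dom →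
          cRank s hR y + j ≤ M := by
        intro j
        induction j with
        | zero =>
            intro p y _ _ hy
            have : y ∈ s.finite.toFinset := by rw [Set.Finite.mem_toFinset]; exact hy
            simpa using Finset.le_sup (f := cRank s hR) this
        | succ j ihj =>
            intro p y hp hl hy
            rw [show k1 + (j + 1) = (k1 + j) + 1 by omega, iter_succ'] at hl
            rcases labelAt_substRaw_cases s.map _ p _ hl with
              ⟨f, _, hlf⟩ | ⟨q, s', y0, rfl, hq, hs⟩
            · exact absurd hlf (by simp)
            · by_cases h0 : y0 ∈ s.dom
              · have hqlen : ¬ q.length < D :=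
                  fun hlt => (hk1 (k1 + j) (by omega) q y0 hlt hq) h0
                have hq1 : q.length = D := by rw [List.length_append] at hp; omega
                have hs' : s' = [] := by rw [List.length_append] at hp; cases s' with
                  | nil => rfl
                  | cons a l => simp at hp; omega
                subst hs'
                have hmap : s.map y0 = .var y := labelAt_nil_inv hs
                have h1 := cRank_lt s hR h0 hmap
                have h2 := ihj q y0 (by omega) hq h0
                omega
              · rw [map_eq_var_of_not_mem_dom s h0] at hs
                obtain ⟨_, rfl⟩ := labelAt_var_inv hs
                exact absurd hy h0
      refine ⟨k1 + (M + 1), fun k hk p y hp hl => ?_⟩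
      intro hy
      have := key (k - k1) p y hp (by rw [show k1 + (k - k1) = k by omega]; exact hl) hy
      omega

lemma eval_apply_eq_of_goodD (s : Subst Sg) (v : ℕ → Carrier Sg) {t : HTerm Sg}
    {p : List ℕ} (h : GoodD s (p.length + 1) t) :
    (s.apply t).eval (strucC Sg) v p = t.eval (strucC Sg) v p := by
  show (t.substRaw s.map).eval (strucC Sg) v p = _
  rw [eval_substRaw]
  refine eval_eq_of_agree t p (fun q s' y hp hq => ?_)
  have hnd : y ∉ s.dom := h q y (by rw [hp, List.length_append]; omega) hq
  rw [map_eq_var_of_not_mem_dom s hnd]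
  rfl

lemma eval_iter_stable (s : Subst Sg) (hR : s.InRSF) (v : ℕ → Carrier Sg)
    (t : HTerm Sg) (p : List ℕ) :
    ∃ k0, ∀ k ≥ k0,
      (s.iter k t).eval (strucC Sg) v p = (s.iter k0 t).eval (strucC Sg) v p := by
  obtain ⟨k0, hk0⟩ := goodD_iter_exists s hR (p.length + 1) t
  refine ⟨k0, fun k hk => ?_⟩
  induction k, hk using Nat.le_induction with
  | base => rfl
  | succ k hk ih => rw [iter_succ', eval_apply_eq_of_goodD s v (hk0 k hk), ih]

/-! #### The canonical solution of an RSF system in the big tree model -/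

noncomputable def wSol (s : Subst Sg) (hR : s.InRSF) (v : ℕ → Carrier Sg) :
    ℕ → Carrier Sg := fun z p =>
  (s.iter (Classical.choose (eval_iter_stable s hR v (.var z) p)) (.var z)).eval
    (strucC Sg) v p

lemma wSol_spec (s : Subst Sg) (hR : s.InRSF) (v : ℕ → Carrier Sg) (z : ℕ) (p : List ℕ) :
    ∃ N, ∀ k ≥ N, (s.iter k (.var z)).eval (strucC Sg) v p = wSol s hR v z p :=
  ⟨_, fun k hk => Classical.choose_spec (eval_iter_stable s hR v (.var z) p) k hk⟩

lemma wSol_not_dom (s : Subst Sg) (hR : s.InRSF) (v : ℕ → Carrier Sg) {z : ℕ}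
    (h : z ∉ s.dom) : wSol s hR v z = v z := by
  funext p
  show (s.iter _ (.var z)).eval (strucC Sg) v p = v z p
  rw [iter_var_of_not_mem_dom s h]
  rfl

lemma iter_app (s : Subst Sg) (k : ℕ) (f : Sg.Sym) (ts) :
    s.iter k (.app f ts) = .app f (fun i => s.iter k (ts i)) := by
  induction k with
  | zero => rfl
  | succ k ih =>
      rw [iter_succ', ih, apply_app]
      exact congrArg (HTerm.app f) (funext fun i => (iter_succ' s k (ts i)).symm)

lemma eval_iter_tendsto (s : Subst Sg) (hR : s.InRSF) (v : ℕ → Carrier Sg)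
    (t : HTerm Sg) (p : List ℕ) :
    ∃ N, ∀ k ≥ N,
      (s.iter k t).eval (strucC Sg) v p = t.eval (strucC Sg) (wSol s hR v) p := by
  induction t generalizing p with
  | var z => exact wSol_spec s hR v z p
  | app f ts ih =>
      cases p with
      | nil => exact ⟨0, fun k _ => by rw [iter_app]; rfl⟩
      | cons i p' =>
          by_cases hi : i < Sg.arity f
          · obtain ⟨N, hN⟩ := ih ⟨i, hi⟩ p'
            refine ⟨N, fun k hk => ?_⟩
            rw [iter_app, eval_app_cons, eval_app_cons, dif_pos hi, dif_pos hi]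
            exact hN k hk
          · exact ⟨0, fun k _ => by
              rw [iter_app, eval_app_cons, eval_app_cons, dif_neg hi, dif_neg hi]⟩

lemma wSol_sat (s : Subst Sg) (hR : s.InRSF) (v : ℕ → Carrier Sg) :
    (strucC Sg).Sat (wSol s hR v) s.eqs := by
  rintro e ⟨z, hz, rfl⟩
  show (HTerm.var z).eval (strucC Sg) (wSol s hR v) = (s.map z).eval (strucC Sg) (wSol s hR v)
  funext p
  obtain ⟨N1, h1⟩ := wSol_spec s hR v z p
  obtain ⟨N2, h2⟩ := eval_iter_tendsto s hR v (s.map z) p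
  have e1 : (s.iter (max N1 N2 + 1) (.var z)).eval (strucC Sg) v p = wSol s hR v z p :=
    h1 _ (by omega)
  have e2 : s.iter (max N1 N2 + 1) (.var z) = s.iter (max N1 N2) (s.map z) := by
    rw [iter_succ, apply_var]
  rw [e2] at e1
  show wSol s hR v z p = _
  rw [← e1, h2 _ (by omega)]

/-! #### Uniqueness of solutions -/

lemma sol_unique (s : Subst Sg) (hR : s.InRSF) (v w1 w2 : ℕ → Carrier Sg)
    (ha1 : ∀ z, z ∉ s.dom → w1 z = v z) (hs1 : (strucC Sg).Sat w1 s.eqs)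
    (ha2 : ∀ z, z ∉ s.dom → w2 z = v z) (hs2 : (strucC Sg).Sat w2 s.eqs) :
    w1 = w2 := by
  have he1 : ∀ z ∈ s.dom, w1 z = (s.map z).eval (strucC Sg) w1 :=
    fun z hz => hs1 (HTerm.var z, s.map z) ⟨z, hz, rfl⟩
  have he2 : ∀ z ∈ s.dom, w2 z = (s.map z).eval (strucC Sg) w2 :=
    fun z hz => hs2 (HTerm.var z, s.map z) ⟨z, hz, rfl⟩
  have main : ∀ n p, p.length = n → ∀ z, w1 z p = w2 z p := by
    intro n
    induction n using Nat.strong_induction_on with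
    | _ n IH =>
    have H : ∀ (u : HTerm Sg) (q : List ℕ), q.length < n →
        u.eval (strucC Sg) w1 q = u.eval (strucC Sg) w2 q := by
      intro u
      induction u with
      | var y => intro q hq; exact IH q.length hq q rfl y
      | app f ts ihu =>
          intro q hq
          cases q with
          | nil => rfl
          | cons i q' =>
              rw [eval_app_cons, eval_app_cons]
              by_cases hi : i < Sg.arity f
              · rw [dif_pos hi, dif_pos hi]
                exact ihu ⟨i, hi⟩ q' (by simp only [List.length_cons] at hq; omega)
              · rw [dif_neg hi, dif_neg hi]
    intro p hp
    have hstep : ∀ z, z ∈ s.dom →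
        (∀ y, s.map z = .var y → y ∈ s.dom → w1 y p = w2 y p) → w1 z p = w2 z p := by
      intro z hz hvar
      rw [congrFun (he1 z hz) p, congrFun (he2 z hz) p]
      cases hm : s.map z with
      | var y =>
          simp only [eval_var]
          by_cases hy : y ∈ s.dom
          · exact hvar y hm hy
          · rw [ha1 y hy, ha2 y hy]
      | app f ts =>
          cases p with
          | nil => rfl
          | cons i q' =>
              rw [eval_app_cons, eval_app_cons]
              by_cases hi : i < Sg.arity f
              · rw [dif_pos hi, dif_pos hi]
                refine H (ts ⟨i, hi⟩) q' ?_
                simp only [List.length_cons] at hp; omega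
              · rw [dif_neg hi, dif_neg hi]
    suffices haux : ∀ c z, cRank s hR z ≤ c → w1 z p = w2 z p from
      fun z => haux (cRank s hR z) z le_rfl
    intro c
    induction c with
    | zero =>
        intro z hc
        by_cases hz : z ∈ s.dom
        · exact hstep z hz (fun y hm hy =>
            absurd (cRank_lt s hR hz hm) (by omega))
        · rw [ha1 z hz, ha2 z hz]
    | succ c ihc =>
        intro z hc
        by_cases hz : z ∈ s.dom
        · refine hstep z hz (fun y hm hy => ihc y ?_)
          have := cRank_lt s hR hz hm; omega
        · rw [ha1 z hz, ha2 z hz]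
  funext z p
  exact main p.length p rfl z

/-! #### The big tree model is a model of RT -/

lemma strucC_interp (Sg : Signature) : (strucC Sg).interp = @interpC Sg := rfl

lemma interpC_nil (f : Sg.Sym) (us) : interpC f us [] = some (Sum.inl f) := rfl

lemma interpC_cons (f : Sg.Sym) (us) (i : ℕ) (p : List ℕ) :
    interpC f us (i :: p) = if h : i < Sg.arity f then us ⟨i, h⟩ p else none := rfl

noncomputable def Amodel (Sg : Signature) : RTModel Sg where
  struc := strucC Sg
  inj := by
    intro f a b h
    funext i p
    have h2 := congrFun h ((i : ℕ) :: p)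
    rw [strucC_interp] at h2
    erw [interpC_cons, interpC_cons, dif_pos i.isLt, dif_pos i.isLt] at h2
    simpa using h2
  distinct := by
    intro f g a b hfg h
    have h2 := congrFun h ([] : List ℕ)
    rw [strucC_interp] at h2
    erw [interpC_nil, interpC_nil] at h2
    simp at h2
    exact hfg h2
  uniqueness := by
    intro s hR v
    refine ⟨wSol s hR v, ⟨fun z hz => wSol_not_dom s hR v hz, wSol_sat s hR v⟩,
      fun w hw => sol_unique s hR v w (wSol s hR v) hw.1 hw.2
        (fun z hz => wSol_not_dom s hR v hz) (wSol_sat s hR v)⟩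


/-! #### Boundedness -/

def BddC (u : Carrier Sg) : Prop := ∃ D, ∀ p : List ℕ, D < p.length → u p = none

lemma BddC_eval {w : ℕ → Carrier Sg} {t : HTerm Sg}
    (h : ∀ y ∈ t.varsIn, BddC (w y)) : BddC (t.eval (strucC Sg) w) := by
  induction t with
  | var z => exact h z rfl
  | app f ts ih =>
      choose D hD using fun i => ih i
        (fun y hy => h y (by rw [varsIn_app, Set.mem_iUnion]; exact ⟨i, hy⟩))
      refine ⟨Finset.univ.sup D + 1, fun p hp => ?_⟩
      cases p with
      | nil => simp at hp
      | cons i q =>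
          rw [eval_app_cons]
          by_cases hi : i < Sg.arity f
          · rw [dif_pos hi]
            refine hD ⟨i, hi⟩ q ?_
            have := Finset.le_sup (f := D) (Finset.mem_univ (⟨i, hi⟩ : Fin (Sg.arity f)))
            simp only [List.length_cons] at hp
            omega
          · rw [dif_neg hi]

lemma BddC_sub {w : ℕ → Carrier Sg} {t : HTerm Sg}
    (h : BddC (t.eval (strucC Sg) w)) {y : ℕ} (hy : y ∈ t.varsIn) : BddC (w y) := by
  obtain ⟨q, hq⟩ := exists_path_of_mem_varsIn hy
  obtain ⟨D, hD⟩ := h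
  refine ⟨D, fun p hp => ?_⟩
  rw [← eval_append_of_labelAt w hq p]
  exact hD _ (by rw [List.length_append]; omega)

/-! #### Evaluation is invariant under satisfied equations -/

lemma eval_apply_of_sat {w : ℕ → Carrier Sg} {s : Subst Sg}
    (hs : (strucC Sg).Sat w s.eqs) (t : HTerm Sg) :
    (s.apply t).eval (strucC Sg) w = t.eval (strucC Sg) w := by
  show (t.substRaw s.map).eval (strucC Sg) w = _
  rw [eval_substRaw]
  have : (fun y => (s.map y).eval (strucC Sg) w) = w := by
    funext y
    by_cases hy : y ∈ s.dom
    · exact (hs (HTerm.var y, s.map y) ⟨y, hy, rfl⟩).symm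
    · rw [map_eq_var_of_not_mem_dom s hy]; rfl
  rw [this]

lemma eval_iter_of_sat {w : ℕ → Carrier Sg} {s : Subst Sg}
    (hs : (strucC Sg).Sat w s.eqs) (k : ℕ) (t : HTerm Sg) :
    (s.iter k t).eval (strucC Sg) w = t.eval (strucC Sg) w := by
  induction k with
  | zero => rfl
  | succ k ih => rw [iter_succ', eval_apply_of_sat hs, ih]

/-! #### hvars lemmas -/

lemma hvarsN_zero_iff (s : Subst Sg) (z : ℕ) : z ∈ s.hvarsN 0 ↔ z ∉ s.dom := Iff.rfl

lemma hvarsN_succ_iff (s : Subst Sg) (n : ℕ) (z : ℕ) :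
    z ∈ s.hvarsN (n + 1) ↔
      z ∈ s.hvarsN n ∨ (z ∈ s.dom ∧ (s.map z).varsIn ⊆ s.hvarsN n) := Iff.rfl

lemma hvarsN_mono (s : Subst Sg) {m n : ℕ} (h : m ≤ n) : s.hvarsN m ⊆ s.hvarsN n := by
  induction h with
  | refl => exact subset_rfl
  | step h ih => exact ih.trans Set.subset_union_left

lemma mem_hvars_of_not_dom (s : Subst Sg) {z : ℕ} (h : z ∉ s.dom) : z ∈ s.hvars :=
  Set.mem_iUnion.mpr ⟨0, h⟩

lemma finset_level (s : Subst Sg) (F : Finset ℕ) (h : ∀ y ∈ F, y ∈ s.hvars) :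
    ∃ n, ∀ y ∈ F, y ∈ s.hvarsN n := by
  classical
  induction F using Finset.induction_on with
  | empty => exact ⟨0, fun y hy => absurd hy (Finset.notMem_empty y)⟩
  | @insert a F ha ih =>
      obtain ⟨n1, hn1⟩ := ih (fun y hy => h y (Finset.mem_insert_of_mem hy))
      obtain ⟨n2, hn2⟩ := Set.mem_iUnion.mp (h a (Finset.mem_insert_self a F))
      refine ⟨max n1 n2, fun y hy => ?_⟩
      rcases Finset.mem_insert.mp hy with rfl | hy
      · exact hvarsN_mono s (le_max_right _ _) hn2
      · exact hvarsN_mono s (le_max_left _ _) (hn1 y hy)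

lemma mem_hvars_of_map_vars (s : Subst Sg) {z : ℕ} (hz : z ∈ s.dom)
    (h : (s.map z).varsIn ⊆ s.hvars) : z ∈ s.hvars := by
  obtain ⟨n, hn⟩ := finset_level s (varsIn_finite (s.map z)).toFinset
    (fun y hy => h ((Set.Finite.mem_toFinset _).mp hy))
  refine Set.mem_iUnion.mpr ⟨n + 1, Or.inr ⟨hz, fun y hy => ?_⟩⟩
  exact hn y ((Set.Finite.mem_toFinset _).mpr hy)

/-! #### Ground iterates -/

/-- All variables of `t` are outside `s.dom`. -/
def GroundTo (s : Subst Sg) (t : HTerm Sg) : Prop := ∀ y ∈ t.varsIn, y ∉ s.dom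

lemma groundTo_mono (s : Subst Sg) {t : HTerm Sg} {k k' : ℕ}
    (h : GroundTo s (s.iter k t)) (hk : k ≤ k') : s.iter k' t = s.iter k t := by
  rw [show k' = (k' - k) + k by omega, iter_add, iter_fix s h]

lemma groundTo_combine (s : Subst Sg) (t : HTerm Sg)
    (h : ∀ y ∈ t.varsIn, ∃ k, GroundTo s (s.iter k (.var y))) :
    ∃ K, GroundTo s (s.iter K t) := by
  classical
  choose k hk using h
  have hfin := varsIn_finite t
  refine ⟨hfin.toFinset.attach.sup
    (fun y => k y.1 ((Set.Finite.mem_toFinset hfin).mp y.2)), ?_⟩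
  intro z hz
  rw [varsIn_iter] at hz
  rw [Set.mem_iUnion] at hz
  obtain ⟨y, hz⟩ := hz
  rw [Set.mem_iUnion] at hz
  obtain ⟨hy, hz⟩ := hz
  have hyF : y ∈ hfin.toFinset := (Set.Finite.mem_toFinset hfin).mpr hy
  have hle := Finset.le_sup
    (f := fun y : {x // x ∈ hfin.toFinset} => k y.1 ((Set.Finite.mem_toFinset hfin).mp y.2))
    (Finset.mem_attach _ ⟨y, hyF⟩)
  rw [groundTo_mono s (hk y _) hle] at hz
  exact hk y _ z hz

lemma groundTo_iter_exists (s : Subst Sg) :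
    ∀ n (t : HTerm Sg), t.varsIn ⊆ s.hvarsN n → ∃ k, GroundTo s (s.iter k t) := by
  intro n
  induction n with
  | zero => exact fun t ht => ⟨0, fun y hy => ht hy⟩
  | succ n ih =>
      intro t ht
      refine groundTo_combine s t (fun y hy => ?_)
      rcases ht hy with hy' | ⟨hyd, hsub⟩
      · exact ih (.var y) (by rw [varsIn_var, Set.singleton_subset_iff]; exact hy')
      · obtain ⟨k, hk⟩ := ih (s.map y) hsub
        refine ⟨k + 1, ?_⟩
        rw [iter_succ, apply_var]
        exact hk

lemma hvars_groundTo_iter_exists (s : Subst Sg) {t : HTerm Sg}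
    (ht : t.varsIn ⊆ s.hvars) : ∃ k, GroundTo s (s.iter k t) := by
  refine groundTo_combine s t (fun y hy => ?_)
  obtain ⟨n, hn⟩ := Set.mem_iUnion.mp (ht hy)
  exact groundTo_iter_exists s n (.var y)
    (by rw [varsIn_var, Set.singleton_subset_iff]; exact hn)

lemma exists_ground_iter (s : Subst Sg) {r : HTerm Sg}
    (hrh : r.varsIn ⊆ s.hvars) (hrg : treeVars (s.rt r) = ∅) :
    ∃ k, (s.iter k r).varsIn = ∅ := by
  obtain ⟨k, hk⟩ := hvars_groundTo_iter_exists s hrh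
  refine ⟨k, Set.eq_empty_iff_forall_notMem.mpr (fun y hy => ?_)⟩
  obtain ⟨q, hq⟩ := exists_path_of_mem_varsIn hy
  have hstable : ∀ i ≥ k, (s.iter i r).labelAt q = some (Sum.inr y) := fun i hi => by
    rw [groundTo_mono s hk hi]; exact hq
  have hex : ∃ v : Option (Sg.Sym ⊕ ℕ), ∃ N : ℕ, ∀ i ≥ N, (s.iter i r).labelAt q = v :=
    ⟨some (Sum.inr y), k, hstable⟩
  have hrt : s.rt r q = some (Sum.inr y) := by
    show (if h : _ then _ else _) = _
    rw [dif_pos hex]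
    obtain ⟨N, hN⟩ := hex.choose_spec
    have h1 := hN (max N k) (le_max_left _ _)
    rw [hstable (max N k) (le_max_right _ _)] at h1
    exact h1.symm
  have : y ∈ treeVars (s.rt r) := ⟨q, hrt⟩
  rw [hrg] at this
  exact this

/-! #### Unboundedness for variables outside hvars -/

lemma not_hvars_var_step (s : Subst Sg) {z : ℕ} (hz : z ∈ s.dom) (hnh : z ∉ s.hvars)
    {y : ℕ} (hm : s.map z = .var y) : y ∈ s.dom ∧ y ∉ s.hvars := by
  constructor
  · by_contra hy
    exact hnh (mem_hvars_of_map_vars s hz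
      (by rw [hm, varsIn_var, Set.singleton_subset_iff]; exact mem_hvars_of_not_dom s hy))
  · intro hy
    exact hnh (mem_hvars_of_map_vars s hz
      (by rw [hm, varsIn_var, Set.singleton_subset_iff]; exact hy))

lemma not_hvars_app_step (s : Subst Sg) {z : ℕ} (hz : z ∈ s.dom) (hnh : z ∉ s.hvars) :
    ∃ y ∈ (s.map z).varsIn, y ∈ s.dom ∧ y ∉ s.hvars := by
  by_contra hc
  push_neg at hc
  refine hnh (mem_hvars_of_map_vars s hz (fun y hy => ?_))
  by_cases hyd : y ∈ s.dom
  · exact hc y hy hyd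
  · exact mem_hvars_of_not_dom s hyd

lemma unbounded_aux (s : Subst Sg) (hR : s.InRSF) {w : ℕ → Carrier Sg}
    (hs : (strucC Sg).Sat w s.eqs) :
    ∀ D c z, cRank s hR z ≤ c → z ∈ s.dom → z ∉ s.hvars →
      ∃ p f, D ≤ p.length ∧ w z p = some (Sum.inl f) := by
  have he : ∀ z ∈ s.dom, w z = (s.map z).eval (strucC Sg) w :=
    fun z hz => hs (HTerm.var z, s.map z) ⟨z, hz, rfl⟩
  intro D
  induction D with
  | zero =>
      intro c
      induction c with
      | zero =>
          intro z hc hz hnh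
          cases hm : s.map z with
          | var y =>
              exact absurd (cRank_lt s hR hz hm) (by omega)
          | app f ts =>
              exact ⟨[], f, by omega, by rw [congrFun (he z hz) [], hm]; rfl⟩
      | succ c ihc =>
          intro z hc hz hnh
          cases hm : s.map z with
          | var y =>
              obtain ⟨hy1, hy2⟩ := not_hvars_var_step s hz hnh hm
              obtain ⟨p, f, hp, hw⟩ := ihc y
                (by have := cRank_lt s hR hz hm; omega) hy1 hy2
              refine ⟨p, f, hp, ?_⟩
              rw [congrFun (he z hz) p, hm]
              exact hw
          | app f ts =>
              exact ⟨[], f, by omega, by rw [congrFun (he z hz) [], hm]; rfl⟩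
  | succ D ihD =>
      intro c
      induction c with
      | zero =>
          intro z hc hz hnh
          cases hm : s.map z with
          | var y =>
              exact absurd (cRank_lt s hR hz hm) (by omega)
          | app f ts =>
              obtain ⟨y, hyv, hy1, hy2⟩ := not_hvars_app_step s hz hnh
              rw [hm] at hyv
              obtain ⟨q, hq⟩ := exists_path_of_mem_varsIn hyv
              obtain ⟨p', f', hp', hw'⟩ := ihD (cRank s hR y) y le_rfl hy1 hy2
              refine ⟨q ++ p', f', ?_, ?_⟩
              · rw [List.length_append]
                have hq1 : 1 ≤ q.length := by
                  cases q with
                  | nil => simp at hq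
                  | cons a l => simp
                omega
              · rw [congrFun (he z hz) (q ++ p'), hm, eval_append_of_labelAt w hq p']
                exact hw'
      | succ c ihc =>
          intro z hc hz hnh
          cases hm : s.map z with
          | var y =>
              obtain ⟨hy1, hy2⟩ := not_hvars_var_step s hz hnh hm
              obtain ⟨p, f, hp, hw⟩ := ihc y
                (by have := cRank_lt s hR hz hm; omega) hy1 hy2
              refine ⟨p, f, hp, ?_⟩
              rw [congrFun (he z hz) p, hm]
              exact hw
          | app f ts =>
              obtain ⟨y, hyv, hy1, hy2⟩ := not_hvars_app_step s hz hnh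
              rw [hm] at hyv
              obtain ⟨q, hq⟩ := exists_path_of_mem_varsIn hyv
              obtain ⟨p', f', hp', hw'⟩ := ihD (cRank s hR y) y le_rfl hy1 hy2
              refine ⟨q ++ p', f', ?_, ?_⟩
              · rw [List.length_append]
                have hq1 : 1 ≤ q.length := by
                  cases q with
                  | nil => simp at hq
                  | cons a l => simp
                omega
              · rw [congrFun (he z hz) (q ++ p'), hm, eval_append_of_labelAt w hq p']
                exact hw'

lemma mem_hvars_of_bddC (s : Subst Sg) (hR : s.InRSF) {w : ℕ → Carrier Sg}
    (hs : (strucC Sg).Sat w s.eqs) {z : ℕ} (hb : BddC (w z)) : z ∈ s.hvars := by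
  by_cases hz : z ∈ s.dom
  · by_contra hnh
    obtain ⟨D, hD⟩ := hb
    obtain ⟨p, f, hp, hw⟩ := unbounded_aux s hR hs (D + 1) (cRank s hR z) z le_rfl hz hnh
    rw [hD p (by omega)] at hw
    cases hw
  · exact mem_hvars_of_not_dom s hz

lemma bddC_of_mem_hvars (s : Subst Sg) {w : ℕ → Carrier Sg}
    (hs : (strucC Sg).Sat w s.eqs) (hbase : ∀ y, y ∉ s.dom → BddC (w y))
    {z : ℕ} (hz : z ∈ s.hvars) : BddC (w z) := by
  obtain ⟨n, hn⟩ := Set.mem_iUnion.mp hz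
  obtain ⟨k, hk⟩ := groundTo_iter_exists s n (.var z)
    (by rw [varsIn_var, Set.singleton_subset_iff]; exact hn)
  have h1 : (s.iter k (.var z)).eval (strucC Sg) w = (HTerm.var z).eval (strucC Sg) w :=
    eval_iter_of_sat hs k (.var z)
  show BddC ((HTerm.var z).eval (strucC Sg) w)
  rw [← h1]
  exact BddC_eval (fun y hy => hbase y (hk y hy))

end AMGU

/-- If `σ ∈ VSubst`, `(r, r')` is `(x, t)` or `(t, x)`,
`vars(r) ⊆ hvars(σ)` and `rt(r, σ)` is ground, then for every
`τ ∈ mgs(σ ∪ {x = t})`: `hvars(σ) ∪ vars(r') ⊆ hvars(τ)`. -/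
theorem amgu_ground_case
    (Sg : Signature) (hconst : ∃ f, Sg.arity f = 0) (hposar : ∃ f, 0 < Sg.arity f)
    (σ : Subst Sg) (hσ : σ.IsVSubst)
    (x : ℕ) (t : HTerm Sg) (hbind : t ≠ HTerm.var x)
    (r r' : HTerm Sg)
    (hrr : (r = HTerm.var x ∧ r' = t) ∨ (r = t ∧ r' = HTerm.var x))
    (hrh : r.varsIn ⊆ σ.hvars)
    (hrg : treeVars (σ.rt r) = ∅) :
    ∀ τ ∈ mgsRT (σ.eqs ∪ {(HTerm.var x, t)}),
      σ.hvars ∪ r'.varsIn ⊆ τ.hvars := by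
  classical
  obtain ⟨f0, hf0⟩ := hconst
  intro τ hτ
  obtain ⟨hτR, hEq, -⟩ := hτ
  set A := AMGU.Amodel Sg with hA
  set cE : AMGU.Carrier Sg := fun p => if p = [] then some (Sum.inl f0) else none with hcE
  have hbc : AMGU.BddC cE := by
    refine ⟨0, fun p hp => ?_⟩
    cases p with
    | nil => simp at hp
    | cons a l => rw [hcE]; exact if_neg (by simp)
  obtain ⟨w, ⟨hwa, hws⟩, -⟩ := A.uniqueness τ hτR (fun _ => cE)
  have hws' : (AMGU.strucC Sg).Sat w τ.eqs := hws
  have hwE : (AMGU.strucC Sg).Sat w (σ.eqs ∪ {(HTerm.var x, t)}) := (hEq A w).mp hws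
  have hwσ : (AMGU.strucC Sg).Sat w σ.eqs := fun e he => hwE e (Set.mem_union_left _ he)
  have hwxt : (HTerm.var x).eval (AMGU.strucC Sg) w = t.eval (AMGU.strucC Sg) w :=
    hwE (HTerm.var x, t) (Set.mem_union_right _ rfl)
  have hbase : ∀ y, y ∉ τ.dom → AMGU.BddC (w y) := fun y hy => by
    rw [hwa y hy]; exact hbc
  obtain ⟨k, hkg⟩ := AMGU.exists_ground_iter σ hrh hrg
  have hBr : AMGU.BddC (r.eval (AMGU.strucC Sg) w) := by
    rw [← AMGU.eval_iter_of_sat hwσ k r]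
    exact AMGU.BddC_eval (fun y hy => absurd (hkg ▸ hy) (Set.notMem_empty y))
  have hBx : AMGU.BddC (w x) := by
    rcases hrr with ⟨hr, -⟩ | ⟨hr, -⟩
    · rw [hr] at hBr; exact hBr
    · rw [hr] at hBr
      show AMGU.BddC ((HTerm.var x).eval (AMGU.strucC Sg) w)
      rw [hwxt]; exact hBr
  have hBt : AMGU.BddC (t.eval (AMGU.strucC Sg) w) := by
    rcases hrr with ⟨hr, -⟩ | ⟨hr, -⟩
    · rw [hr] at hBr; rw [← hwxt]; exact hBr
    · rw [hr] at hBr; exact hBr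
  have hmain : ∀ n z, z ∈ σ.hvarsN n → AMGU.BddC (w z) := by
    intro n
    induction n with
    | zero =>
        intro z hz0
        have hz0' : z ∉ σ.dom := hz0
        by_cases hzτ : z ∈ τ.dom
        · by_cases hit : ∃ m, z ∈ (σ.iter m t).varsIn ∨ z ∈ (σ.iter m (HTerm.var x)).varsIn
          · obtain ⟨m, hm | hm⟩ := hit
            · refine AMGU.BddC_sub ?_ hm
              rw [AMGU.eval_iter_of_sat hwσ m t]; exact hBt
            · refine AMGU.BddC_sub ?_ hm
              rw [AMGU.eval_iter_of_sat hwσ m (HTerm.var x)]; exact hBx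
          · push_neg at hit
            set u : ℕ → AMGU.Carrier Sg := Function.update w z cE with hu
            obtain ⟨w2, ⟨hw2a, hw2s⟩, -⟩ := A.uniqueness σ hσ.1 u
            have hw2s' : (AMGU.strucC Sg).Sat w2 σ.eqs := hw2s
            have hcmp : ∀ s0 : HTerm Sg, (∀ m, z ∉ (σ.iter m s0).varsIn) →
                s0.eval (AMGU.strucC Sg) w2 = s0.eval (AMGU.strucC Sg) w := by
              intro s0 hzs
              funext p
              obtain ⟨m0, hm0⟩ := AMGU.goodD_iter_exists σ hσ.1 (p.length + 1) s0
              rw [← AMGU.eval_iter_of_sat hw2s' m0 s0, ← AMGU.eval_iter_of_sat hwσ m0 s0]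
              refine AMGU.eval_eq_of_agree _ p (fun q s' y hp hq => ?_)
              have hynd : y ∉ σ.dom :=
                hm0 m0 le_rfl q y (by rw [hp, List.length_append]; omega) hq
              have hyz : y ≠ z := fun hyz =>
                hzs m0 (hyz ▸ AMGU.mem_varsIn_of_labelAt hq)
              rw [hw2a y hynd, hu]
              erw [Function.update_of_ne hyz]
            have hsat2 : (AMGU.strucC Sg).Sat w2 (σ.eqs ∪ {(HTerm.var x, t)}) := by
              intro e he
              rcases he with he | he
              · exact hw2s' e he
              · rw [Set.mem_singleton_iff] at he
                subst he
                show (HTerm.var x).eval (AMGU.strucC Sg) w2 = t.eval (AMGU.strucC Sg) w2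
                rw [hcmp (HTerm.var x) (fun m => (hit m).2), hcmp t (fun m => (hit m).1)]
                exact hwxt
            have hw2τ : (AMGU.strucC Sg).Sat w2 τ.eqs := (hEq A w2).mpr hsat2
            have hz2 : z ∈ τ.hvars := by
              refine AMGU.mem_hvars_of_bddC τ hτR hw2τ ?_
              rw [hw2a z hz0', hu]
              erw [Function.update_self]
              exact hbc
            exact AMGU.bddC_of_mem_hvars τ hws' hbase hz2
        · rw [hwa z hzτ]; exact hbc
    | succ n ih =>
        intro z hz
        rcases (AMGU.hvarsN_succ_iff σ n z).mp hz with hz | ⟨hzd, hsub⟩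
        · exact ih z hz
        · have heq : w z = (σ.map z).eval (AMGU.strucC Sg) w :=
            hwσ (HTerm.var z, σ.map z) ⟨z, hzd, rfl⟩
          rw [heq]
          exact AMGU.BddC_eval (fun y hy => ih y (hsub hy))
  intro z hz
  have conv : AMGU.BddC (w z) → z ∈ τ.hvars := fun hb =>
    AMGU.mem_hvars_of_bddC τ hτR hws' hb
  rcases hz with hz | hz
  · obtain ⟨n, hn⟩ := Set.mem_iUnion.mp hz
    exact conv (hmain n z hn)
  · rcases hrr with ⟨-, hr'⟩ | ⟨-, hr'⟩
    · rw [hr'] at hz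
      exact conv (AMGU.BddC_sub hBt hz)
    · rw [hr'] at hz
      rw [AMGU.varsIn_var, Set.mem_singleton_iff] at hz
      exact conv (hz ▸ hBx)
end
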